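/- arXiv:2205.03367 — 6 statements merged into one kernel-verified Lean document; each statement's English description precedes it below -/
import Mathlib

section
/- If f : ℝ → ℝ is infinitely differentiable and all odd-order derivatives of f vanish at 0, then the function g defined by g(r) = f'(r)/r for r ≠ 0 and g(0) = f''(0) is also infinitely differentiable with all odd-order derivatives vanishing at 0. -/
open Filter Set FormalMultilinearSeries
open scoped Topology

/-- Property (N): infinitely differentiable with all odd-order derivatives vanishing at 0. -/
def PropertyN (f : ℝ → ℝ) : Prop :=
  ContDiff ℝ (⊤ : ℕ∞) f ∧ ∀ n : ℕ, Odd n → iteratedDeriv n f 0 = 0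

/-- g(r) = f'(r)/r for r ≠ 0, g(0) = f''(0). -/
noncomputable def gFun (f : ℝ → ℝ) : ℝ → ℝ :=
  fun r => if r = 0 then iteratedDeriv 2 f 0 else deriv f r / r

noncomputable def GInt (k : ℕ) (φ : ℝ → ℝ) : ℝ → ℝ :=
  fun x => ∫ t in (0:ℝ)..1, t ^ k * φ (t * x)

lemma GInt_hasDerivAt (k : ℕ) (φ : ℝ → ℝ) (hφ : ContDiff ℝ (⊤ : ℕ∞) φ) (x₀ : ℝ) :
    HasDerivAt (GInt k φ) (GInt (k+1) (deriv φ) x₀) x₀ := by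
  have hd : Differentiable ℝ φ := hφ.differentiable (by simp)
  have hc : Continuous φ := hφ.continuous
  have hφ' : Continuous (deriv φ) := hφ.continuous_deriv (by simp)
  obtain ⟨C, hC⟩ := (isCompact_closedBall (0:ℝ) (|x₀| + 1)).exists_bound_of_continuousOn
    hφ'.continuousOn
  have key := intervalIntegral.hasDerivAt_integral_of_dominated_loc_of_deriv_le
    (μ := MeasureTheory.volume) (a := 0) (b := 1)
    (F := fun x t => t ^ k * φ (t * x)) (F' := fun x t => t ^ (k+1) * deriv φ (t * x))
    (x₀ := x₀) (s := Metric.ball x₀ 1) (bound := fun _ => C)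
    (Metric.ball_mem_nhds x₀ one_pos) ?_ ?_ ?_ ?_ ?_ ?_
  · exact key.2
  · exact Filter.Eventually.of_forall (fun x =>
      ((continuous_pow k).mul (hc.comp (continuous_id.mul continuous_const))).aestronglyMeasurable)
  · exact ((continuous_pow k).mul
      (hc.comp (continuous_id.mul continuous_const))).intervalIntegrable _ _
  · exact ((continuous_pow (k+1)).mul
      (hφ'.comp (continuous_id.mul continuous_const))).aestronglyMeasurable
  · refine Filter.Eventually.of_forall (fun t ht x hx => ?_)
    rw [Set.uIoc_of_le zero_le_one] at ht
    have ht0 : 0 ≤ t := ht.1.le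
    have ht1 : t ≤ 1 := ht.2
    have hmem : t * x ∈ Metric.closedBall (0:ℝ) (|x₀| + 1) := by
      rw [Metric.mem_closedBall, dist_zero_right, Real.norm_eq_abs, abs_mul, abs_of_nonneg ht0]
      have hx' : |x| ≤ |x₀| + 1 := by
        rw [Metric.mem_ball, Real.dist_eq] at hx
        have := abs_sub_abs_le_abs_sub x x₀
        linarith
      calc t * |x| ≤ 1 * (|x₀| + 1) := mul_le_mul ht1 hx' (abs_nonneg _) zero_le_one
        _ = |x₀| + 1 := one_mul _
    have h1 := hC _ hmem
    rw [norm_mul, norm_pow, Real.norm_eq_abs, abs_of_nonneg ht0]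
    calc t ^ (k+1) * ‖deriv φ (t * x)‖ ≤ 1 * C :=
          mul_le_mul (pow_le_one₀ ht0 ht1) h1 (norm_nonneg _) zero_le_one
      _ = C := one_mul _
  · exact intervalIntegrable_const
  · refine Filter.Eventually.of_forall (fun t _ x _ => ?_)
    have h2 := ((hd (t * x)).hasDerivAt.comp x ((hasDerivAt_id x).const_mul t)).const_mul (t ^ k)
    exact h2.congr_deriv (by ring)

lemma GInt_deriv (k : ℕ) (φ : ℝ → ℝ) (hφ : ContDiff ℝ (⊤ : ℕ∞) φ) :
    deriv (GInt k φ) = GInt (k+1) (deriv φ) :=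
  funext fun x => (GInt_hasDerivAt k φ hφ x).deriv

lemma deriv_smooth {φ : ℝ → ℝ} (hφ : ContDiff ℝ (⊤ : ℕ∞) φ) :
    ContDiff ℝ (⊤ : ℕ∞) (deriv φ) :=
  (contDiff_infty_iff_deriv.mp hφ).2

lemma GInt_contDiff (n : ℕ) : ∀ (k : ℕ) (φ : ℝ → ℝ), ContDiff ℝ (⊤ : ℕ∞) φ →
    ContDiff ℝ n (GInt k φ) := by
  induction n with
  | zero =>
    intro k φ hφ
    exact contDiff_zero.mpr
      (continuous_iff_continuousAt.2 fun x => (GInt_hasDerivAt k φ hφ x).continuousAt)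
  | succ n ih =>
    intro k φ hφ
    rw [Nat.cast_succ, contDiff_succ_iff_deriv]
    refine ⟨fun x => (GInt_hasDerivAt k φ hφ x).differentiableAt, by simp, ?_⟩
    rw [GInt_deriv k φ hφ]
    exact ih _ _ (deriv_smooth hφ)

lemma GInt_iteratedDeriv (n : ℕ) : ∀ (k : ℕ) (φ : ℝ → ℝ), ContDiff ℝ (⊤ : ℕ∞) φ →
    iteratedDeriv n (GInt k φ) = GInt (k + n) (iteratedDeriv n φ) := by
  induction n with
  | zero => intro k φ _; simp
  | succ n ih =>
    intro k φ hφ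
    rw [iteratedDeriv_succ', GInt_deriv k φ hφ, ih _ _ (deriv_smooth hφ), iteratedDeriv_succ',
      show k + 1 + n = k + (n + 1) by ring]

theorem stmt_1 (f : ℝ → ℝ) (hf : PropertyN f) : PropertyN (gFun f) := by
  obtain ⟨hsm, hodd⟩ := hf
  set h : ℝ → ℝ := deriv f with hh
  have hh0 : h 0 = 0 := by
    have := hodd 1 ⟨0, by norm_num⟩
    simpa [iteratedDeriv_one] using this
  have hhs : ContDiff ℝ (⊤ : ℕ∞) h := deriv_smooth hsm
  have hφs : ContDiff ℝ (⊤ : ℕ∞) (deriv h) := deriv_smooth hhs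
  have hgI : gFun f = GInt 0 (deriv h) := by
    funext r
    rcases eq_or_ne r 0 with rfl | hr
    · simp [gFun, GInt, iteratedDeriv_succ, iteratedDeriv_one, hh]
    · rw [gFun, if_neg hr]
      simp only [GInt, pow_zero, one_mul]
      rw [intervalIntegral.integral_comp_mul_right (deriv h) hr, zero_mul, one_mul,
        intervalIntegral.integral_deriv_eq_sub (fun x _ => hhs.differentiable (by simp) x)
          (hφs.continuous.intervalIntegrable _ _), hh0, sub_zero, smul_eq_mul, ← hh,
        div_eq_inv_mul]
  constructor
  · rw [hgI]; exact contDiff_infty.mpr (fun n => GInt_contDiff n 0 _ hφs)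
  · intro n hn
    rw [hgI, GInt_iteratedDeriv n 0 _ hφs]
    have e : iteratedDeriv n (deriv h) 0 = 0 := by
      have : iteratedDeriv (n + 1 + 1) f 0 = 0 := by
        refine hodd (n + 1 + 1) ?_
        obtain ⟨k, rfl⟩ := hn
        exact ⟨k + 1, by ring⟩
      rw [iteratedDeriv_succ', iteratedDeriv_succ'] at this
      exact this
    simp [GInt, e]
end

section
/- If a C^∞ function f on ℝ has property (N), then for any integer n ≥ 1 and the function g(r) = f'(r)/r (with g(0) = f''(0)), the n-th derivative of g at 0 equals f^{(n+2)}(0)/(n+1). -/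
open intervalIntegral MeasureTheory


lemma aux_hasDerivAt (h : ℝ → ℝ) (hh : ContDiff ℝ (⊤ : ℕ∞) h) (k : ℕ) (x₀ : ℝ) :
    HasDerivAt (fun x => ∫ t in (0:ℝ)..1, t ^ k * h (t * x))
      (∫ t in (0:ℝ)..1, t ^ (k + 1) * deriv h (t * x₀)) x₀ := by
  have hcont : Continuous h := hh.continuous
  have hcd : Continuous (deriv h) := hh.continuous_deriv (by exact_mod_cast le_top)
  obtain ⟨C, hC⟩ := (isCompact_Icc (a := -(|x₀| + 1)) (b := |x₀| + 1)).exists_bound_of_continuousOn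
      hcd.continuousOn
  have key := intervalIntegral.hasDerivAt_integral_of_dominated_loc_of_deriv_le
      (μ := volume) (a := (0:ℝ)) (b := 1) (x₀ := x₀)
      (F := fun x t => t ^ k * h (t * x)) (F' := fun x t => t ^ (k + 1) * deriv h (t * x))
      (bound := fun _ => |C|) (s := Metric.ball x₀ 1) (Metric.ball_mem_nhds x₀ one_pos)
      ?_ ?_ ?_ ?_ ?_ ?_
  · exact key.2
  · filter_upwards with x
    have : Continuous fun t : ℝ => t ^ k * h (t * x) := by fun_prop
    exact this.aestronglyMeasurable
  · have : Continuous fun t : ℝ => t ^ k * h (t * x₀) := by fun_prop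
    exact this.intervalIntegrable (μ := volume) 0 1
  · have : Continuous fun t : ℝ => t ^ (k + 1) * deriv h (t * x₀) := by fun_prop
    exact this.aestronglyMeasurable
  · filter_upwards with t ht x hx
    have ht' : t ∈ Set.Ioc (0:ℝ) 1 := by simpa [Set.uIoc_of_le (zero_le_one)] using ht
    have hxb : |x| ≤ |x₀| + 1 := by
      have := mem_ball_iff_norm.mp hx
      have : |x - x₀| < 1 := this
      calc |x| = |x₀ + (x - x₀)| := by ring_nf
        _ ≤ |x₀| + |x - x₀| := abs_add_le _ _
        _ ≤ |x₀| + 1 := by linarith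
    have htx : t * x ∈ Set.Icc (-(|x₀| + 1)) (|x₀| + 1) := by
      rw [Set.mem_Icc, ← abs_le]
      calc |t * x| = |t| * |x| := abs_mul _ _
        _ ≤ 1 * (|x₀| + 1) := by
            apply mul_le_mul _ hxb (abs_nonneg _) zero_le_one
            rw [abs_le]; constructor <;> linarith [ht'.1, ht'.2]
        _ = |x₀| + 1 := one_mul _
    have hb := hC _ htx
    calc ‖t ^ (k+1) * deriv h (t * x)‖ = |t| ^ (k+1) * ‖deriv h (t * x)‖ := by
          rw [norm_mul, norm_pow]; rfl
      _ ≤ 1 ^ (k+1) * C := by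
          apply mul_le_mul _ hb (norm_nonneg _) (by positivity)
          apply pow_le_pow_left₀ (abs_nonneg _)
          rw [abs_le]; constructor <;> linarith [ht'.1, ht'.2]
      _ ≤ |C| := by simpa using le_abs_self C
  · exact intervalIntegrable_const
  · filter_upwards with t ht x hx
    have h1 : HasDerivAt h (deriv h (t * x)) (t * x) :=
      ((hh.differentiable (by simp)) (t * x)).hasDerivAt
    have h2 : HasDerivAt (fun x : ℝ => t * x) t x := by
      simpa using (hasDerivAt_id x).const_mul t
    have h3 := (h1.comp x h2).const_mul (t ^ k)
    rw [show t ^ (k + 1) * deriv h (t * x) = t ^ k * (deriv h (t * x) * t) by ring]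
    exact h3


theorem stmt_2 (f : ℝ → ℝ) (hf : PropertyN f) (n : ℕ) (hn : 1 ≤ n) :
    iteratedDeriv n (gFun f) 0 = iteratedDeriv (n + 2) f 0 / (n + 1) := by
  have hfinf : ContDiff ℝ (⊤ : ℕ∞) f := hf.1.of_le (by simp)
  have hsm : ∀ m : ℕ, ContDiff ℝ (⊤ : ℕ∞) (iteratedDeriv m f) := by
    intro m
    rw [iteratedDeriv_eq_iterate]
    exact hfinf.iterate_deriv m
  set G : ℕ → ℝ → ℝ := fun k x => ∫ t in (0:ℝ)..1, t ^ k * iteratedDeriv (k + 2) f (t * x)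
    with hGdef
  have hG : ∀ k x₀, HasDerivAt (G k) (G (k + 1) x₀) x₀ := by
    intro k x₀
    have := aux_hasDerivAt (iteratedDeriv (k + 2) f) (hsm (k + 2)) k x₀
    convert this using 2 with t
    rw [← iteratedDeriv_succ]
  have hiter : ∀ k, iteratedDeriv k (G 0) = G k := by
    intro k
    induction k with
    | zero => simp [iteratedDeriv_zero]
    | succ k ih =>
      rw [iteratedDeriv_succ, ih]
      funext x
      exact (hG k x).deriv
  have hg0 : gFun f = G 0 := by
    funext x
    by_cases hx : x = 0
    · subst hx
      simp [gFun, hGdef, intervalIntegral.integral_const]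
    · have hft : ∀ t ∈ Set.uIcc (0:ℝ) 1,
          HasDerivAt (fun t : ℝ => iteratedDeriv 1 f (t * x) / x)
            (iteratedDeriv 2 f (t * x)) t := by
        intro t _
        have h1 : HasDerivAt (iteratedDeriv 1 f) (iteratedDeriv 2 f (t * x)) (t * x) := by
          have hd := ((hsm 1).differentiable (by simp) (t * x)).hasDerivAt
          have he : deriv (iteratedDeriv 1 f) (t * x) = iteratedDeriv 2 f (t * x) := by
            rw [← iteratedDeriv_succ]
          rwa [he] at hd
        have h2 : HasDerivAt (fun t : ℝ => t * x) x t := by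
          simpa using (hasDerivAt_id t).mul_const x
        have h3 := (h1.comp t h2).div_const x
        rwa [mul_div_cancel_right₀ _ hx] at h3
      have hint : IntervalIntegrable (fun t : ℝ => iteratedDeriv 2 f (t * x)) volume 0 1 := by
        have : Continuous fun t : ℝ => iteratedDeriv 2 f (t * x) := by
          have := (hsm 2).continuous
          fun_prop
        exact this.intervalIntegrable 0 1
      have := intervalIntegral.integral_eq_sub_of_hasDerivAt hft hint
      have hzero : iteratedDeriv 1 f 0 = 0 := hf.2 1 odd_one
      simp only [one_mul, zero_mul, hzero, zero_div, sub_zero] at this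
      simp only [gFun, if_neg hx, hGdef, pow_zero, one_mul]
      rw [this, iteratedDeriv_one]
  rw [hg0, hiter n, hGdef]
  simp only [zero_mul, mul_zero]
  rw [intervalIntegral.integral_mul_const, integral_pow]
  push_cast
  ring
end

section
/- For a Kirchhoff junction as above, the divergence of û = ψ * ν at any point x₀ equals ψ(x₀ − p̂) · ∑_{j=1}^n o_j |ê_j|; in particular it vanishes identically when the Kirchhoff condition ∑_j o_j|ê_j| = 0 holds. -/
open MeasureTheory

noncomputable section

abbrev E3 := EuclideanSpace ℝ (Fin 3)

/-- The ray emanating from `p` in the direction of the unit vector `e/‖e‖`. -/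
def ray (p e : E3) : Set E3 := (fun t : ℝ => p + t • (‖e‖⁻¹ • e)) '' Set.Ici 0

/-- Convolution of `ψ` with the vector-valued Radon measure `∑ j, o j • e j • H¹⌞(ray p (e j))`,
computed componentwise. -/
noncomputable def kirchhoffField (n : ℕ) (ψ : E3 → ℝ) (p : E3) (e : Fin n → E3)
    (o : Fin n → ℝ) : E3 → E3 :=
  fun x => ∑ j : Fin n,
    (o j * ∫ y, ψ (x - y) ∂(μH[1].restrict (ray p (e j)))) • e j

/-- The divergence of a vector field on ℝ³. -/
noncomputable def divg (u : E3 → E3) (x : E3) : ℝ :=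
  ∑ i : Fin 3, fderiv ℝ (fun y => u y i) x (EuclideanSpace.single i 1)

open Set Filter Topology

lemma isometry_rayMap (p u : E3) (hu : ‖u‖ = 1) : Isometry (fun t : ℝ => p + t • u) := by
  apply Isometry.of_dist_eq
  intro a b
  simp only [dist_eq_norm]
  rw [show (p + a • u) - (p + b • u) = (a - b) • u by module, norm_smul, hu]
  simp [Real.norm_eq_abs]

lemma restrict_ray_eq_map (p u : E3) (hu : ‖u‖ = 1) :
    (μH[1] : Measure E3).restrict ((fun t : ℝ => p + t • u) '' Set.Ici 0)
      = Measure.map (fun t : ℝ => p + t • u) (volume.restrict (Set.Ici 0)) := by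
  set f : ℝ → E3 := fun t => p + t • u with hf
  have hiso : Isometry f := isometry_rayMap p u hu
  refine Measure.ext fun A hA => ?_
  rw [Measure.restrict_apply hA, Measure.map_apply hiso.continuous.measurable hA,
    Measure.restrict_apply (hA.preimage hiso.continuous.measurable)]
  have : A ∩ f '' Set.Ici 0 = f '' (f ⁻¹' A ∩ Set.Ici 0) := by
    rw [Set.image_preimage_inter]
  rw [this, hiso.hausdorffMeasure_image (Or.inl one_pos.le), ← hausdorffMeasure_real]

/-- integral over the ray of a continuous function. -/
lemma integral_ray (p u : E3) (hu : ‖u‖ = 1) {g : E3 → ℝ} (hg : Continuous g) :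
    ∫ y, g y ∂((μH[1] : Measure E3).restrict ((fun t : ℝ => p + t • u) '' Set.Ici 0))
      = ∫ t in Set.Ici (0 : ℝ), g (p + t • u) := by
  rw [restrict_ray_eq_map p u hu,
    integral_map (isometry_rayMap p u hu).continuous.aemeasurable
      hg.aestronglyMeasurable]

/-- A continuous function on `ℝ` (valued in a Banach space) vanishing beyond `T`
is integrable on `Ici 0`. -/
lemma integrableOn_Ici_of_vanish {V : Type*} [NormedAddCommGroup V] {g : ℝ → V}
    (hg : Continuous g) (T : ℝ) (hv : ∀ t, T < t → g t = 0) :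
    IntegrableOn g (Set.Ici (0 : ℝ)) := by
  have h1 : IntegrableOn g (Set.Icc (0 : ℝ) T) := hg.integrableOn_Icc
  have h2 : IntegrableOn g (Set.Ioi T) := by
    refine (integrableOn_congr_fun (g := fun _ => (0 : V)) ?_ measurableSet_Ioi).mpr
      ((integrableOn_const_iff (by simp)).2 (Or.inl (by simp)))
    intro t ht; exact hv t ht
  have : Set.Ici (0 : ℝ) ⊆ Set.Icc 0 T ∪ Set.Ioi T := by
    intro t ht
    rcases le_or_gt t T with h | h
    · exact Or.inl ⟨ht, h⟩
    · exact Or.inr h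
  exact (h1.union h2).mono_set this

lemma key {ε : ℝ} {ψ : E3 → ℝ} (hε : 0 < ε) (hψ : ContDiff ℝ (⊤ : ℕ∞) ψ)
    (hsupp : tsupport ψ ⊆ Metric.closedBall 0 ε)
    (p u : E3) (hu : ‖u‖ = 1) (x₀ : E3) :
    ∃ L : E3 →L[ℝ] ℝ,
      HasFDerivAt (fun x => ∫ t in Set.Ici (0 : ℝ), ψ (x - (p + t • u))) L x₀ ∧
      L u = ψ (x₀ - p) := by
  have hψc : Continuous ψ := hψ.continuous
  have hψd : Differentiable ℝ ψ := hψ.differentiable (by simp)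
  have hcs : HasCompactSupport ψ :=
    IsCompact.of_isClosed_subset (isCompact_closedBall 0 ε) (isClosed_tsupport ψ) hsupp
  have hfc : Continuous (fderiv ℝ ψ) := hψ.continuous_fderiv (by simp)
  obtain ⟨C, hC⟩ := (hcs.fderiv (𝕜 := ℝ)).exists_bound_of_continuous hfc
  have hψ0 : ∀ y : E3, ε < ‖y‖ → ψ y = 0 := by
    intro y hy
    by_contra h
    have := hsupp (subset_tsupport ψ (Function.mem_support.2 h))
    simp only [Metric.mem_closedBall, dist_zero_right] at this
    linarith
  have hfd0 : ∀ y : E3, ε < ‖y‖ → fderiv ℝ ψ y = 0 := by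
    intro y hy
    by_contra h
    have := hsupp (support_fderiv_subset (𝕜 := ℝ) (Function.mem_support.2 h))
    simp only [Metric.mem_closedBall, dist_zero_right] at this
    linarith
  set T : ℝ := ε + ‖x₀ - p‖ + 1 with hT
  have hfar : ∀ x ∈ Metric.ball x₀ 1, ∀ t : ℝ, T < t → ε < ‖x - (p + t • u)‖ := by
    intro x hx t ht
    have hxx : ‖x - x₀‖ < 1 := by
      simpa [dist_eq_norm] using hx
    have hxp : ‖x - p‖ < 1 + ‖x₀ - p‖ := by
      calc ‖x - p‖ = ‖(x - x₀) + (x₀ - p)‖ := by abel_nf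
        _ ≤ ‖x - x₀‖ + ‖x₀ - p‖ := norm_add_le _ _
        _ < 1 + ‖x₀ - p‖ := by linarith
    have h1 : ‖x - (p + t • u)‖ = ‖t • u - (x - p)‖ := by
      rw [← norm_neg]; congr 1; abel
    have h2 : ‖t • u‖ - ‖x - p‖ ≤ ‖t • u - (x - p)‖ := norm_sub_norm_le _ _
    have h3 : ‖t • u‖ = |t| := by rw [norm_smul, hu, Real.norm_eq_abs, mul_one]
    have ht0 : 0 < t := by have : 0 < T := by positivity
                           linarith
    rw [h1]
    have : |t| = t := abs_of_pos ht0
    linarith [h2, h3.symm ▸ h2]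
  have hcont_inner : ∀ x : E3, Continuous fun t : ℝ => x - (p + t • u) :=
    fun x => continuous_const.sub (continuous_const.add (continuous_id.smul continuous_const))
  have hD : ∀ (c : E3) (x : E3), HasFDerivAt (fun x => ψ (x - c)) (fderiv ℝ ψ (x - c)) x := by
    intro c x
    have h2 : HasFDerivAt (fun y : E3 => y - c) (ContinuousLinearMap.id ℝ E3) x :=
      (hasFDerivAt_id x).sub_const c
    simpa [Function.comp_def] using (hψd (x - c)).hasFDerivAt.comp x h2
  -- differentiation under the integral sign
  have hF'int : IntegrableOn (fun t : ℝ => fderiv ℝ ψ (x₀ - (p + t • u))) (Set.Ici 0) := by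
    refine integrableOn_Ici_of_vanish (hfc.comp (hcont_inner x₀)) T fun t ht => ?_
    exact hfd0 _ (hfar x₀ (Metric.mem_ball_self one_pos) t ht)
  have hmain : HasFDerivAt (fun x => ∫ t in Set.Ici (0 : ℝ), ψ (x - (p + t • u)))
      (∫ t in Set.Ici (0 : ℝ), fderiv ℝ ψ (x₀ - (p + t • u))) x₀ := by
    apply hasFDerivAt_integral_of_dominated_of_fderiv_le (𝕜 := ℝ) (s := Metric.ball x₀ 1)
      (F := fun x t => ψ (x - (p + t • u)))
      (F' := fun x t => fderiv ℝ ψ (x - (p + t • u)))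
      (μ := volume.restrict (Set.Ici 0))
      (bound := Set.indicator (Set.Icc 0 T) fun _ => C) (Metric.ball_mem_nhds x₀ one_pos)
    · exact Eventually.of_forall fun x =>
        ((hψc.comp (hcont_inner x)).aestronglyMeasurable)
    · refine integrableOn_Ici_of_vanish (hψc.comp (hcont_inner x₀)) T fun t ht => ?_
      exact hψ0 _ (hfar x₀ (Metric.mem_ball_self one_pos) t ht)
    · exact ((hfc.comp (hcont_inner x₀)).aestronglyMeasurable)
    · refine (ae_restrict_iff' measurableSet_Ici).2 (Eventually.of_forall fun t ht x hx => ?_)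
      rcases le_or_gt t T with h | h
      · rw [Set.indicator_of_mem (Set.mem_Icc.mpr ⟨ht, h⟩)]
        exact hC _
      · rw [Set.indicator_of_notMem (fun hm => not_lt.2 (Set.mem_Icc.mp hm).2 h),
          hfd0 _ (hfar x hx t h)]
        simp
    · exact ((integrable_indicator_iff measurableSet_Icc).2
        ((integrableOn_const_iff (by simp)).2 (Or.inr measure_Icc_lt_top))).restrict
    · exact Eventually.of_forall fun t x hx => hD (p + t • u) x
  refine ⟨_, hmain, ?_⟩
  -- evaluate the derivative at u via the fundamental theorem of calculus
  rw [ContinuousLinearMap.integral_apply hF'int]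
  set g : ℝ → ℝ := fun t => ψ (x₀ - (p + t • u)) with hg
  have hg' : ∀ t : ℝ, HasDerivAt g (fderiv ℝ ψ (x₀ - (p + t • u)) (-u)) t := by
    intro t
    have hi : HasDerivAt (fun t : ℝ => x₀ - (p + t • u)) (-u) t := by
      have h1 : HasDerivAt (fun t : ℝ => t • u) u t := by
        simpa using (hasDerivAt_id t).smul_const u
      simpa using (h1.const_add p).const_sub x₀
    exact (hψd _).hasFDerivAt.comp_hasDerivAt t hi
  have hgcont : Continuous g := hψc.comp (hcont_inner x₀)
  have htend : Tendsto g atTop (𝓝 0) := by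
    have hev : g =ᶠ[atTop] fun _ => 0 :=
      (eventually_gt_atTop T).mono fun t ht =>
        hψ0 _ (hfar x₀ (Metric.mem_ball_self one_pos) t ht)
    exact Tendsto.congr' hev.symm tendsto_const_nhds
  have hint : IntegrableOn (fun t : ℝ => fderiv ℝ ψ (x₀ - (p + t • u)) (-u)) (Set.Ioi (0:ℝ)) volume := by
    refine (integrableOn_Ici_of_vanish ?_ T fun t ht => ?_).mono_set Set.Ioi_subset_Ici_self
    · exact (ContinuousLinearMap.apply ℝ ℝ (-u)).continuous.comp (hfc.comp (hcont_inner x₀))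
    · rw [hfd0 _ (hfar x₀ (Metric.mem_ball_self one_pos) t ht)]; simp
  have hftc := integral_Ioi_of_hasDerivAt_of_tendsto (a := 0)
    (hgcont.continuousWithinAt) (fun t _ => hg' t) hint htend
  have hg0 : g 0 = ψ (x₀ - p) := by simp [hg]
  rw [MeasureTheory.integral_Ici_eq_integral_Ioi]
  have : ∀ t : ℝ, fderiv ℝ ψ (x₀ - (p + t • u)) u
      = -(fderiv ℝ ψ (x₀ - (p + t • u)) (-u)) := by
    intro t; rw [map_neg, neg_neg]
  simp_rw [this]
  rw [integral_neg, hftc, hg0]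
  ring

lemma E3_sum_apply {m : ℕ} (f : Fin m → E3) (i : Fin 3) :
    (∑ j : Fin m, f j) i = ∑ j : Fin m, f j i := by
  have h := map_sum (EuclideanSpace.proj (𝕜 := ℝ) i) f Finset.univ
  exact h

lemma basis_decomp (v : E3) :
    ∑ i : Fin 3, v i • (EuclideanSpace.single i (1:ℝ) : E3) = v := by
  refine PiLp.ext fun i => ?_
  rw [E3_sum_apply]
  simp only [PiLp.smul_apply, EuclideanSpace.single_apply, smul_eq_mul, mul_ite, mul_one,
    mul_zero]
  simp [Finset.sum_ite_eq]

/-- The divergence of the mollified junction measure equals `ψ(x₀ − p̂) ∑ j o j |ê j|`. -/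
theorem stmt_4 (n : ℕ) (ε : ℝ) (hε : 0 < ε) (ψ : E3 → ℝ)
    (hψ : ContDiff ℝ (⊤ : ℕ∞) ψ) (hsupp : tsupport ψ ⊆ Metric.closedBall 0 ε)
    (p : E3) (e : Fin n → E3) (he : ∀ j, e j ≠ 0)
    (o : Fin n → ℝ) (ho : ∀ j, o j = 1 ∨ o j = -1) (x₀ : E3) :
    divg (kirchhoffField n ψ p e o) x₀
      = ψ (x₀ - p) * ∑ j : Fin n, o j * ‖e j‖ := by
  set u : Fin n → E3 := fun j => ‖e j‖⁻¹ • e j with hudef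
  have hne : ∀ j, ‖e j‖ ≠ 0 := fun j => norm_ne_zero_iff.2 (he j)
  have hu : ∀ j, ‖u j‖ = 1 := by
    intro j
    simp [hudef, norm_smul, abs_of_nonneg (inv_nonneg.2 (norm_nonneg _)),
      inv_mul_cancel₀ (hne j)]
  set G : Fin n → E3 → ℝ := fun j x => ∫ t in Set.Ici (0:ℝ), ψ (x - (p + t • u j))
    with hGdef
  have hGeq : ∀ j x, (∫ y, ψ (x - y) ∂((μH[1] : Measure E3).restrict (ray p (e j))))
      = G j x := by
    intro j x
    exact integral_ray p (u j) (hu j)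
      (hψ.continuous.comp (continuous_const.sub continuous_id))
  choose L hL hLu using fun j => key hε hψ hsupp p (u j) (hu j) x₀
  have hLe : ∀ j, L j (e j) = ‖e j‖ * ψ (x₀ - p) := by
    intro j
    have h1 : e j = ‖e j‖ • u j := by
      rw [hudef]; simp [smul_smul, mul_inv_cancel₀ (hne j)]
    calc (L j) (e j) = (L j) (‖e j‖ • u j) := by rw [← h1]
      _ = ‖e j‖ * ψ (x₀ - p) := by rw [(L j).map_smul, hLu j, smul_eq_mul]
  have hki : ∀ i : Fin 3, (fun y => kirchhoffField n ψ p e o y i)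
      = fun y => ∑ j : Fin n, (o j * G j y) * e j i := by
    intro i; funext y
    simp only [kirchhoffField]
    rw [E3_sum_apply]
    refine Finset.sum_congr rfl fun j _ => ?_
    rw [PiLp.smul_apply, smul_eq_mul, hGeq j y]
  have hfd : ∀ i : Fin 3, fderiv ℝ (fun y => kirchhoffField n ψ p e o y i) x₀
      = ∑ j : Fin n, (e j i) • ((o j) • L j) := by
    intro i
    rw [hki i]
    exact (HasFDerivAt.fun_sum fun j _ => ((hL j).const_mul (o j)).mul_const (e j i)).fderiv
  simp only [divg, hfd, ContinuousLinearMap.sum_apply, ContinuousLinearMap.smul_apply,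
    smul_eq_mul]
  rw [Finset.sum_comm]
  have : ∀ j : Fin n, ∑ i : Fin 3,
      e j i * (o j * (L j) (EuclideanSpace.single i 1)) = o j * (‖e j‖ * ψ (x₀ - p)) := by
    intro j
    have h2 : ∑ i : Fin 3, e j i * (L j) (EuclideanSpace.single i 1)
        = (L j) (e j) := by
      calc ∑ i : Fin 3, e j i * (L j) (EuclideanSpace.single i 1)
          = ∑ i : Fin 3, (L j) (e j i • EuclideanSpace.single i 1) := by
            simp only [(L j).map_smul, smul_eq_mul]
        _ = (L j) (∑ i : Fin 3, e j i • (EuclideanSpace.single i (1:ℝ) : E3)) := by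
            rw [map_sum]
        _ = (L j) (e j) := by rw [basis_decomp]
    calc ∑ i : Fin 3, e j i * (o j * (L j) (EuclideanSpace.single i 1))
        = o j * ∑ i : Fin 3, e j i * (L j) (EuclideanSpace.single i 1) := by
          rw [Finset.mul_sum]; exact Finset.sum_congr rfl fun i _ => by ring
      _ = o j * (‖e j‖ * ψ (x₀ - p)) := by rw [h2, hLe j]
  rw [Finset.sum_congr rfl fun j _ => this j, Finset.mul_sum]
  exact Finset.sum_congr rfl fun j _ => by ring
end
end

section
/- For 0 < a ≤ b, ∫₀¹ [1/√(σ²+a²) − 1/√(σ²+b²)] dσ ≤ (1/2) log(1 + 4(b²−a²)/(3a²)). -/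
open Real

/-!
An antiderivative of `1 / √(σ² + c²)` is `arsinh (σ / c)`, so the integral equals
`arsinh (1/a) - arsinh (1/b)`. Since `arsinh (1/c) + log c = log (1 + √(1 + c²))` increases with `c`,
this is at most `log b - log a = ½ log (b²/a²)`, and `b²/a² ≤ 1 + 4(b² - a²)/(3a²)`.
-/

lemma sqrt_one_add_div_sq {c : ℝ} (hc : 0 < c) (x : ℝ) :
    √(1 + (x / c) ^ 2) = √(x ^ 2 + c ^ 2) / c := by
  rw [eq_div_iff hc.ne', ← sqrt_sq hc.le, ← sqrt_mul (by positivity), sqrt_sq hc.le]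
  congr 1
  field_simp
  ring

lemma hasDerivAt_arsinh_div {c : ℝ} (hc : 0 < c) (x : ℝ) :
    HasDerivAt (fun σ ↦ arsinh (σ / c)) (1 / √(x ^ 2 + c ^ 2)) x := by
  have h := (hasDerivAt_arsinh (x / c)).comp x ((hasDerivAt_id x).div_const c)
  refine h.congr_deriv ?_
  rw [sqrt_one_add_div_sq hc]
  field_simp

lemma continuous_one_div_sqrt_sq_add_sq {c : ℝ} (hc : c ≠ 0) :
    Continuous fun σ : ℝ ↦ 1 / √(σ ^ 2 + c ^ 2) :=
  continuous_const.div (by fun_prop) fun σ ↦ by positivity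

lemma integral_one_div_sqrt_sq_add_sq {c : ℝ} (hc : 0 < c) (x y : ℝ) :
    ∫ σ in x..y, 1 / √(σ ^ 2 + c ^ 2) = arsinh (y / c) - arsinh (x / c) :=
  intervalIntegral.integral_eq_sub_of_hasDerivAt (fun σ _ ↦ hasDerivAt_arsinh_div hc σ)
    ((continuous_one_div_sqrt_sq_add_sq hc.ne').intervalIntegrable _ _)

lemma arsinh_one_div_add_log {c : ℝ} (hc : 0 < c) :
    arsinh (1 / c) + log c = log (1 + √(1 + c ^ 2)) := by
  rw [arsinh, sqrt_one_add_div_sq hc, ← log_mul (by positivity) hc.ne']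
  congr 1
  field_simp

lemma arsinh_one_div_sub_arsinh_one_div_le {a b : ℝ} (ha : 0 < a) (hab : a ≤ b) :
    arsinh (1 / a) - arsinh (1 / b) ≤ log b - log a := by
  have hmono : log (1 + √(1 + a ^ 2)) ≤ log (1 + √(1 + b ^ 2)) := by
    gcongr
  linarith [arsinh_one_div_add_log ha, arsinh_one_div_add_log (ha.trans_le hab)]

theorem stmt_6 (a b : ℝ) (ha : 0 < a) (hab : a ≤ b) :
    (∫ σ in (0:ℝ)..1, (1 / Real.sqrt (σ^2 + a^2) - 1 / Real.sqrt (σ^2 + b^2)))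
      ≤ (1/2) * Real.log (1 + 4 * (b^2 - a^2) / (3 * a^2)) := by
  have hb : 0 < b := ha.trans_le hab
  rw [intervalIntegral.integral_sub
      ((continuous_one_div_sqrt_sq_add_sq ha.ne').intervalIntegrable _ _)
      ((continuous_one_div_sqrt_sq_add_sq hb.ne').intervalIntegrable _ _),
    integral_one_div_sqrt_sq_add_sq ha, integral_one_div_sqrt_sq_add_sq hb]
  simp only [zero_div, arsinh_zero, sub_zero]
  have hratio : b ^ 2 / a ^ 2 ≤ 1 + 4 * (b ^ 2 - a ^ 2) / (3 * a ^ 2) := by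
    have hsq : a ^ 2 ≤ b ^ 2 := by gcongr
    rw [one_add_div (by positivity), div_le_div_iff₀ (by positivity) (by positivity)]
    nlinarith
  calc arsinh (1 / a) - arsinh (1 / b)
      ≤ log b - log a := arsinh_one_div_sub_arsinh_one_div_le ha hab
    _ = 1 / 2 * log (b ^ 2 / a ^ 2) := by
      rw [log_div (by positivity) (by positivity), log_pow, log_pow]
      push_cast
      ring
    _ ≤ _ := by gcongr
end

section
/- For 0 < a < b, ∫₀¹ σ · P₁(σ) dσ ≤ π/(2b³), where P₁(σ) = (2abπ)/(4(b²−a²)³) · [4/√(σ²+b²) − 4/√(σ²+a²) + (b²−a²)(1/(σ²+a²)^{3/2} + 1/(σ²+b²)^{3/2})]. -/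
/-!
`σ ↦ σ P₁(σ)` has an elementary antiderivative in `√(σ² + a²)` and `√(σ² + b²)`. Writing
`u = √(s² + a²)`, `v = √(s² + b²)` for the upper endpoint `s`, the bound clears to a polynomial
inequality in `a, b, u, v`; multiplied by `u + v` and reduced with `v² - u² = b² - a²`, the
difference becomes a sum of nonnegative terms, the last one because `3b³ ≥ a³ + 2a²b`.
-/

open Real

/-- The explicit function P₁. -/
noncomputable def P₁ (a b σ : ℝ) : ℝ :=
  (2 * a * b * Real.pi) / (4 * (b^2 - a^2)^3) *
    (4 / Real.sqrt (σ^2 + b^2) - 4 / Real.sqrt (σ^2 + a^2)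
      + (b^2 - a^2) * (1 / (σ^2 + a^2) ^ ((3:ℝ)/2) + 1 / (σ^2 + b^2) ^ ((3:ℝ)/2)))

lemma rpow_three_halves_eq_mul_sqrt {x : ℝ} (hx : 0 < x) : x ^ ((3:ℝ)/2) = x * √x := by
  rw [show (3:ℝ)/2 = 1 + 1/2 by norm_num, rpow_add hx, rpow_one, sqrt_eq_rpow]

lemma hasDerivAt_sqrt_sq_add {k : ℝ} (hk : 0 < k) (σ : ℝ) :
    HasDerivAt (fun x : ℝ => √(x^2 + k)) (σ / √(σ^2 + k)) σ := by
  have hpos : 0 < σ^2 + k := by positivity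
  convert ((hasDerivAt_pow 2 σ).add_const k).sqrt hpos.ne' using 1
  field_simp
  ring

lemma hasDerivAt_inv_sqrt_sq_add {k : ℝ} (hk : 0 < k) (σ : ℝ) :
    HasDerivAt (fun x : ℝ => (√(x^2 + k))⁻¹) (-(σ / (σ^2 + k) ^ ((3:ℝ)/2))) σ := by
  have hpos : 0 < σ^2 + k := by positivity
  refine ((hasDerivAt_sqrt_sq_add hk σ).inv (sqrt_pos.mpr hpos).ne').congr_deriv ?_
  rw [rpow_three_halves_eq_mul_sqrt hpos, sq_sqrt hpos.le]
  field_simp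

lemma continuous_P₁ {a b : ℝ} (ha : a ≠ 0) (hb : b ≠ 0) : Continuous (P₁ a b) := by
  unfold P₁
  fun_prop (disch := intros; positivity)

noncomputable def P₁Primitive (a b σ : ℝ) : ℝ :=
  (2 * a * b * π) / (4 * (b^2 - a^2)^3) *
    (4 * √(σ^2 + b^2) - 4 * √(σ^2 + a^2) - (b^2 - a^2) * ((√(σ^2 + a^2))⁻¹ + (√(σ^2 + b^2))⁻¹))

lemma hasDerivAt_P₁Primitive {a b : ℝ} (ha : a ≠ 0) (hb : b ≠ 0) (σ : ℝ) :
    HasDerivAt (P₁Primitive a b) (σ * P₁ a b σ) σ := by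
  have ha2 : 0 < a^2 := by positivity
  have hb2 : 0 < b^2 := by positivity
  have := ((((hasDerivAt_sqrt_sq_add hb2 σ).const_mul 4).sub
    ((hasDerivAt_sqrt_sq_add ha2 σ).const_mul 4)).sub
    (((hasDerivAt_inv_sqrt_sq_add ha2 σ).add (hasDerivAt_inv_sqrt_sq_add hb2 σ)).const_mul
      (b^2 - a^2))).const_mul ((2 * a * b * π) / (4 * (b^2 - a^2)^3))
  refine this.congr_deriv ?_
  unfold P₁
  ring

lemma integral_mul_P₁ {a b : ℝ} (ha : a ≠ 0) (hb : b ≠ 0) (s : ℝ) :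
    ∫ σ in (0:ℝ)..s, σ * P₁ a b σ = P₁Primitive a b s - P₁Primitive a b 0 :=
  intervalIntegral.integral_eq_sub_of_hasDerivAt (fun σ _ => hasDerivAt_P₁Primitive ha hb σ)
    ((continuous_id.mul (continuous_P₁ ha hb)).intervalIntegrable 0 s)

lemma endpoint_polynomial_le {a b u v : ℝ} (ha : 0 < a) (hab : a < b) (hu : 0 < u) (hv : 0 < v)
    (huv : v^2 - u^2 = b^2 - a^2) :
    b^3 * (4 * (v - b - u + a) * (a * u * b * v) + (b^2 - a^2) * (b * v * (u - a) + a * u * (v - b)))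
      ≤ (b^2 - a^2)^3 * (u * v) := by
  have hb : 0 < b := ha.trans hab
  have hcubic : 0 ≤ 3 * b^3 - a^3 - 2 * a^2 * b := by nlinarith [mul_pos ha hb]
  have hsos : ((b^2 - a^2)^3 * (u * v) - b^3 * (4 * (v - b - u + a) * (a * u * b * v)
        + (b^2 - a^2) * (b * v * (u - a) + a * u * (v - b)))) * (u + v)
      = a * (b^4 * (b^2 - a^2) * (v - u)^2
        + u * v * (u + v) * (b - a)^2 * (3 * b^3 - a^3 - 2 * a^2 * b)) := by
    linear_combination (-4 * a * b^4 * u * v) * huv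
  have hba : 0 ≤ b^2 - a^2 := by nlinarith
  have : 0 ≤ a * (b^4 * (b^2 - a^2) * (v - u)^2
      + u * v * (u + v) * (b - a)^2 * (3 * b^3 - a^3 - 2 * a^2 * b)) := by positivity
  nlinarith [add_pos hu hv]

lemma P₁Primitive_sub_P₁Primitive_zero_le {a b : ℝ} (ha : 0 < a) (hab : a < b) (s : ℝ) :
    P₁Primitive a b s - P₁Primitive a b 0 ≤ π / (2 * b^3) := by
  have hb : 0 < b := ha.trans hab
  have hba : 0 < b^2 - a^2 := by nlinarith
  have h0 : P₁Primitive a b 0 = (2 * a * b * π) / (4 * (b^2 - a^2)^3) *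
      (4 * b - 4 * a - (b^2 - a^2) * (a⁻¹ + b⁻¹)) := by
    simp [P₁Primitive, sqrt_sq ha.le, sqrt_sq hb.le]
  rw [h0, P₁Primitive]
  set u := √(s^2 + a^2)
  set v := √(s^2 + b^2)
  have hu : 0 < u := by positivity
  have hv : 0 < v := by positivity
  have huv : v^2 - u^2 = b^2 - a^2 := by
    rw [sq_sqrt (by positivity), sq_sqrt (by positivity)]
    ring
  have key := endpoint_polynomial_le ha hab hu hv huv
  rw [← sub_nonneg]
  field_simp
  nlinarith [mul_le_mul_of_nonneg_left key (by positivity : (0:ℝ) ≤ 4 * a * b * π), pi_pos]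

theorem stmt_8 (a b : ℝ) (ha : 0 < a) (hab : a < b) :
    (∫ σ in (0:ℝ)..1, σ * P₁ a b σ) ≤ Real.pi / (2 * b^3) := by
  rw [integral_mul_P₁ ha.ne' (ha.trans hab).ne']
  exact P₁Primitive_sub_P₁Primitive_zero_le ha hab 1
end

section
/- Let 0 < c₂ < c₁ < 1, ε < 1/4, z ∈ [0, 1/2], and z' ∈ (1/2 − c₁ε, 1/2 − c₂ε). With b = |(2/π) cos(π(z+z')/2)|, one has b ≥ (1/4)(1/2 − z + c₂ε). -/
open Real

/-- For `t ≤ 1`: trivial when `t < 0`, and Jordan's inequality `sin x ≥ (2/π) x` on `[0, π/2]`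
otherwise. -/
theorem le_abs_sin_pi_mul_div_two {t : ℝ} (ht : t ≤ 1) : t ≤ |sin (π * t / 2)| := by
  rcases lt_or_ge t 0 with hneg | hnonneg
  · exact hneg.le.trans (abs_nonneg _)
  · have jordan := mul_le_sin (x := π * t / 2) (by positivity) (by nlinarith [pi_pos])
    rw [show 2 / π * (π * t / 2) = t by field_simp] at jordan
    exact jordan.trans (le_abs_self _)

theorem one_div_four_le_two_div_pi : (1 / 4 : ℝ) ≤ 2 / π := by
  rw [div_le_div_iff₀ (by norm_num) pi_pos]
  linarith [pi_le_four]

theorem stmt_12_general (c₁ c₂ ε z z' : ℝ)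
    (h1 : c₁ < 1) (hε : 0 < ε) (hε4 : ε < 1/4)
    (hz : z ∈ Set.Icc (0:ℝ) (1/2))
    (hz' : z' ∈ Set.Ioo (1/2 - c₁ * ε) (1/2 - c₂ * ε)) :
    (1/4) * (1/2 - z + c₂ * ε) ≤ |(2/π) * Real.cos (π * (z + z') / 2)| := by
  obtain ⟨hz'_lo, hz'_hi⟩ := hz'
  have hcos : cos (π * (z + z') / 2) = sin (π * (1 - z - z') / 2) := by
    rw [← sin_pi_div_two_sub]; ring_nf
  have hc₁ε : c₁ * ε < 1 / 4 := by nlinarith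
  have hsin := le_abs_sin_pi_mul_div_two (t := 1 - z - z') (by linarith [hz.1])
  calc (1/4) * (1/2 - z + c₂ * ε) ≤ (1/4) * |sin (π * (1 - z - z') / 2)| := by
        gcongr; linarith
    _ ≤ (2/π) * |sin (π * (1 - z - z') / 2)| := by
        gcongr ?_ * _; exact one_div_four_le_two_div_pi
    _ = |(2/π) * cos (π * (z + z') / 2)| := by
        rw [abs_mul, abs_of_pos (by positivity : (0:ℝ) < 2 / π), hcos]

theorem stmt_12 (c₁ c₂ ε z z' : ℝ)
    (h2 : 0 < c₂) (h21 : c₂ < c₁) (h1 : c₁ < 1) (hε : 0 < ε) (hε4 : ε < 1/4)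
    (hz : z ∈ Set.Icc (0:ℝ) (1/2))
    (hz' : z' ∈ Set.Ioo (1/2 - c₁ * ε) (1/2 - c₂ * ε)) :
    (1/4) * (1/2 - z + c₂ * ε) ≤ |(2/π) * Real.cos (π * (z + z') / 2)| :=
  stmt_12_general c₁ c₂ ε z z' h1 hε hε4 hz hz'
end
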